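/- Let F(x) = −(2/3)·x·log(x) + (2/3)·x for x > 0. If 0 < a < 1 < b and F(a) = F(b), then a + b > 2. -/

import Mathlib

/-!
Up to the factor `2 / 3`, `F x = negMulLog x + x`, whose derivative is `-log x`. The mirrored
difference `F (2 - x) - F x` has derivative `log (x (2 - x)) < 0` on `(0, 1)` and vanishes at `1`,
so `F a < F (2 - a)`. Hence `F b = F a < F (2 - a)` with `b, 2 - a` both in `[1, ∞)`, where `F` is
decreasing, which forces `2 - a < b`.
-/

open Real Set

namespace Real

lemma hasDerivAt_negMulLog_add_self {x : ℝ} (hx : x ≠ 0) :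
    HasDerivAt (fun y => negMulLog y + y) (-log x) x := by
  simpa using (hasDerivAt_negMulLog hx).fun_add (hasDerivAt_id x)

lemma continuous_negMulLog_add_self : Continuous fun x => negMulLog x + x :=
  continuous_negMulLog.add continuous_id

lemma strictAntiOn_negMulLog_add_self : StrictAntiOn (fun x => negMulLog x + x) (Ici 1) := by
  refine strictAntiOn_of_deriv_neg (convex_Ici 1) continuous_negMulLog_add_self.continuousOn ?_
  intro x hx
  rw [interior_Ici] at hx
  rw [(hasDerivAt_negMulLog_add_self (by linarith [mem_Ioi.mp hx])).deriv]
  exact neg_neg_of_pos (log_pos hx)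

lemma strictAntiOn_negMulLog_add_self_two_sub_sub :
    StrictAntiOn (fun x => (negMulLog (2 - x) + (2 - x)) - (negMulLog x + x)) (Ioc 0 1) := by
  refine strictAntiOn_of_deriv_neg (convex_Ioc 0 1)
    ((continuous_negMulLog_add_self.comp (continuous_const.sub continuous_id)).sub
      continuous_negMulLog_add_self).continuousOn ?_
  intro x hx
  rw [interior_Ioc] at hx
  obtain ⟨hx0, hx1⟩ := hx
  have hmirror : HasDerivAt (fun y => negMulLog (2 - y) + (2 - y)) (log (2 - x)) x := by
    simpa [Function.comp_def] using
      (hasDerivAt_negMulLog_add_self (by linarith : 2 - x ≠ 0)).comp x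
        ((hasDerivAt_id x).const_sub 2)
  have hdiff : HasDerivAt (fun y => (negMulLog (2 - y) + (2 - y)) - (negMulLog y + y))
      (log (2 - x) + log x) x := by
    simpa using hmirror.fun_sub (hasDerivAt_negMulLog_add_self hx0.ne')
  rw [hdiff.deriv, ← log_mul (by linarith) hx0.ne']
  exact log_neg (by nlinarith) (by nlinarith)

lemma negMulLog_add_self_lt_two_sub {x : ℝ} (hx0 : 0 < x) (hx1 : x < 1) :
    negMulLog x + x < negMulLog (2 - x) + (2 - x) := by
  have h := strictAntiOn_negMulLog_add_self_two_sub_sub ⟨hx0, hx1.le⟩ ⟨one_pos, le_rfl⟩ hx1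
  norm_num at h
  linarith

end Real

theorem F_equal_values_sum_gt_two (a b : ℝ) (ha0 : 0 < a) (ha1 : a < 1) (hb : 1 < b)
    (hF : -(2 / 3 : ℝ) * a * Real.log a + (2 / 3 : ℝ) * a
        = -(2 / 3 : ℝ) * b * Real.log b + (2 / 3 : ℝ) * b) :
    2 < a + b := by
  have hab : negMulLog a + a = negMulLog b + b := by
    simp only [negMulLog]
    linarith
  by_contra! hle
  have hmirror := negMulLog_add_self_lt_two_sub ha0 ha1
  have hdecr := strictAntiOn_negMulLog_add_self.antitoneOn (mem_Ici.mpr hb.le)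
    (mem_Ici.mpr (by linarith : (1 : ℝ) ≤ 2 - a)) (by linarith : b ≤ 2 - a)
  linarith
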